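/- Let C_8 = R·(b_1(x) + ug_1(x) + u²g_2(x)) + R·(ub_2(x) + u²g_3(x)) + R·u²b_3(x) be a left ideal of Type 8 of R := R^{3,x^{p^s}−λ}_Θ, i.e. b_1(x), b_2(x), b_3(x) ∈ B_λ^1 of degree ≤ p^s−1 and g_1(x), g_2(x), g_3(x) ∈ F_{p^m}[x,θ]/⟨(λ_{0,0}x−1)^{p^s}⟩, satisfying: (a) whenever u²b(x) ∈ R·(b_1(x)+ug_1(x)+u²g_2(x)) + R·(ub_2(x)+u²g_3(x)), then b_3(x) |_r b(x); and (b) whenever ub(x) + u²g(x) ∈ R·(b_1(x)+ug_1(x)+u²g_2(x)), then b_2(x) |_r b(x). Then Tor_1(C_8) = (F_{p^m}[x,θ]/⟨(λ_{0,0}x−1)^{p^s}⟩)·b_2(x) and Tor_2(C_8) = (F_{p^m}[x,θ]/⟨(λ_{0,0}x−1)^{p^s}⟩)·b_3(x). -/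
import Mathlib


open Polynomial

namespace SkewPaper

variable (p m t : ℕ) [Fact p.Prime]

/-- The finite field `F_{p^m}`. -/
abbrev Fq : Type := GaloisField p m

/-- The finite chain ring `R^t = F_{p^m}[u]/⟨u^t⟩`. -/
abbrev Rt : Type :=
  Polynomial (Fq p m) ⧸ Ideal.span {(Polynomial.X : Polynomial (Fq p m)) ^ t}

/-- The element `u` of `R^t`. -/
noncomputable def uE : Rt p m t := Ideal.Quotient.mk _ Polynomial.X

/-- The canonical embedding `F_{p^m} → R^t`. -/
noncomputable def eps : Fq p m →+* Rt p m t :=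
  (Ideal.Quotient.mk _).comp Polynomial.C

/-- The automorphism `Θ` of `R^t` extending `θ` with `Θ(u) = u`,
i.e. `Θ(a₀ + a₁u + ⋯ + a_{t-1}u^{t-1}) = θ(a₀) + θ(a₁)u + ⋯ + θ(a_{t-1})u^{t-1}`. -/
noncomputable def Th (theta : Fq p m ≃+* Fq p m) : Rt p m t ≃+* Rt p m t :=
  Ideal.quotientEquiv _ _ (Polynomial.mapEquiv theta) (by
    rw [Ideal.map_span, Set.image_singleton]
    simp [Polynomial.mapEquiv_apply])

/-- Reduction of `R^t` modulo `u`. -/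
noncomputable def rdc (ht : 0 < t) : Rt p m t →+* Fq p m :=
  Ideal.Quotient.lift _ (Polynomial.evalRingHom 0) (by
    intro a ha
    rw [Ideal.mem_span_singleton] at ha
    obtain ⟨b, rfl⟩ := ha
    simp [zero_pow ht.ne'])

/-- `a` right-divides `b`, i.e. `b = h * a` for some `h`. -/
def RDvd {A : Type*} [Mul A] (a b : A) : Prop := ∃ h, b = h * a

/-- The element `Σᵢ ι(cᵢ) X^i` determined by a coefficient family `c`. -/
noncomputable def spoly {R A : Type*} [Semiring R] [Semiring A] (iot : R →+* A) (X : A)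
    (c : ℕ →₀ R) : A :=
  c.sum fun i a => iot a * X ^ i

/-- Lift `Σᵢ ι(ε(cᵢ)) X^i` of a skew polynomial over `F_{p^m}` to the skew polynomial ring
over `R^t` (coefficient-wise, via the embedding `F_{p^m} → R^t`). -/
noncomputable def liftP {A : Type*} [Semiring A] (iot : Rt p m t →+* A) (X : A)
    (c : ℕ →₀ Fq p m) : A :=
  c.sum fun i a => iot (eps p m t a) * X ^ i

/-- `λ = λ₀ + uλ₁ + ⋯ + u^{t-1}λ_{t-1}` as an element of `R^t`. -/
noncomputable def lamOf (lc : ℕ → Fq p m) : Rt p m t :=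
  ∑ i ∈ Finset.range t, eps p m t (lc i) * uE p m t ^ i

/-- The order `|Θ|` of `Θ` in the automorphism group of `R^t`. -/
noncomputable def thOrder (theta : Fq p m ≃+* Fq p m) : ℕ :=
  orderOf (G := RingAut (Rt p m t)) (Th p m t theta)

/-- The order `|θ|` of `θ` in the automorphism group of `F_{p^m}`. -/
noncomputable def thetaOrder (theta : Fq p m ≃+* Fq p m) : ℕ :=
  orderOf (G := RingAut (Fq p m)) theta

/-- The central polynomial `f(x) = Σᵢ fᵢ x^{i·|Θ|}` in the skew polynomial ring. -/
noncomputable def fOf {A : Type*} [Ring A] (theta : Fq p m ≃+* Fq p m)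
    (iot : Rt p m t →+* A) (X : A) (fc : ℕ →₀ Rt p m t) : A :=
  fc.sum fun i a => iot a * X ^ (i * thOrder p m t theta)

/-- The image of `u` in the quotient `R^{t,f}_Θ`. -/
noncomputable def uQ {P Q : Type*} [Semiring P] [Semiring Q] (iot : Rt p m t →+* P)
    (piQ : P →+* Q) : Q :=
  piQ (iot (uE p m t))

/-- The image in `R^{t,f}_Θ` of the lift of a skew polynomial over `F_{p^m}`. -/
noncomputable def lQ {P Q : Type*} [Semiring P] [Semiring Q] (iot : Rt p m t →+* P) (X : P)
    (piQ : P →+* Q) (c : ℕ →₀ Fq p m) : Q :=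
  piQ (liftP p m t iot X c)

/-- The class in `F_{p^m}[x,θ]/⟨f̄⟩` of the skew polynomial with coefficients `c`. -/
noncomputable def lQf {Pf Qf : Type*} [Semiring Pf] [Semiring Qf] (iotf : Fq p m →+* Pf)
    (Xf : Pf) (pif : Pf →+* Qf) (c : ℕ →₀ Fq p m) : Qf :=
  pif (spoly iotf Xf c)

/-- `b(x)` right-divides `c(x)` in the quotient `F_{p^m}[x,θ]/⟨f̄⟩`. -/
def RDvdC {Pf Qf : Type*} [Semiring Pf] [Semiring Qf] (iotf : Fq p m →+* Pf) (Xf : Pf)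
    (pif : Pf →+* Qf) (b c : ℕ →₀ Fq p m) : Prop :=
  ∃ h : Qf, lQf p m iotf Xf pif c = h * lQf p m iotf Xf pif b

/-- Membership in `B_w`: representative of degree `≤ D - 1` which right-divides `w`. -/
def InB {Pf : Type*} [Semiring Pf] (iotf : Fq p m →+* Pf) (Xf : Pf) (w : Pf) (D : ℕ)
    (c : ℕ →₀ Fq p m) : Prop :=
  (∀ i, D ≤ i → c i = 0) ∧ RDvd (spoly iotf Xf c) w

/-- `deg c < deg d` for coefficient families. -/
def degLt {R : Type*} [Zero R] (c d : ℕ →₀ R) : Prop := c.support.max < d.support.max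

/-- "Type (ii)" left ideals of `R^{t,f}_Θ`: those of the form
`Σⱼ R (u^{(t-1)-i_j} b_{i_j}(x) - u^{(t-1)-(i_j-1)} g_{i_j}(x))` with
`0 ≤ i₁ < ⋯ < i_n ≤ t-2`, `b_{i_j} ∈ B_w` of degree `≤ D - 1`, together with the
right-divisibility side condition. -/
def TypeTwo (p m t : ℕ) [Fact p.Prime] {P Pf Q Qf : Type*} [Ring P] [Ring Pf] [Ring Q] [Ring Qf]
    (iot : Rt p m t →+* P) (Xp : P) (piQ : P →+* Q)
    (iotf : Fq p m →+* Pf) (Xf : Pf) (pif : Pf →+* Qf)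
    (w : Pf) (D : ℕ) (J : Ideal Q) : Prop :=
  ∃ (n : ℕ) (idx : Fin n → ℕ) (bcs : Fin n → (ℕ →₀ Fq p m)) (gs : Fin n → Q),
    StrictMono idx ∧ (∀ j, idx j ≤ t - 2) ∧ (∀ j, InB p m iotf Xf w D (bcs j)) ∧
    J = Submodule.span Q (Set.range fun j : Fin n =>
        uQ p m t iot piQ ^ (t - 1 - idx j) * lQ p m t iot Xp piQ (bcs j)
          - uQ p m t iot piQ ^ (t - idx j) * gs j) ∧
    ∀ (j k : Fin n), j < k → ∀ (cc : ℕ →₀ Fq p m) (g : Q),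
      uQ p m t iot piQ ^ (t - 1 - idx j) * lQ p m t iot Xp piQ cc
          + uQ p m t iot piQ ^ (t - idx j) * g ∈
        Submodule.span Q ((fun l : Fin n =>
          uQ p m t iot piQ ^ (t - 1 - idx l) * lQ p m t iot Xp piQ (bcs l)
            - uQ p m t iot piQ ^ (t - idx l) * gs l) '' {l | k ≤ l}) →
      RDvdC p m iotf Xf pif (bcs j) cc


/-! ### Auxiliary lemmas -/

lemma Th_u (theta : Fq p m ≃+* Fq p m) : Th p m t theta (uE p m t) = uE p m t := by
  simp [Th, uE, Ideal.quotientEquiv_mk, Polynomial.mapEquiv_apply]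

lemma rdc_eps (ht : 0 < t) (a : Fq p m) : rdc p m t ht (eps p m t a) = a := by
  simp [rdc, eps]

lemma rdc_u (ht : 0 < t) : rdc p m t ht (uE p m t) = 0 := by
  simp [rdc, uE]

lemma u_cube : (uE p m 3) ^ 3 = 0 := by
  rw [uE, ← map_pow, Ideal.Quotient.eq_zero_iff_mem]
  exact Ideal.subset_span rfl

lemma decomp (r : Rt p m 3) : ∃ a0 a1 a2 : Fq p m,
    r = eps p m 3 a0 + uE p m 3 * eps p m 3 a1 + uE p m 3 ^ 2 * eps p m 3 a2 := by
  obtain ⟨f, rfl⟩ := Ideal.Quotient.mk_surjective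
    (I := Ideal.span {(Polynomial.X : Polynomial (Fq p m)) ^ 3}) r
  refine ⟨f.coeff 0, f.divX.coeff 0, f.divX.divX.coeff 0, ?_⟩
  have key : ∀ g : Polynomial (Fq p m), (uE p m 3) ^ 2 * Ideal.Quotient.mk _ g
      = (uE p m 3) ^ 2 * eps p m 3 (g.coeff 0) := by
    intro g
    conv_lhs => rw [← Polynomial.X_mul_divX_add g]
    rw [map_add, mul_add]
    have : (uE p m 3) ^ 2 * Ideal.Quotient.mk _ (X * g.divX) = 0 := by
      rw [uE, ← map_pow, ← map_mul, Ideal.Quotient.eq_zero_iff_mem]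
      exact Ideal.mem_span_singleton.mpr ⟨g.divX, by ring⟩
    rw [this, zero_add]
    rfl
  conv_lhs => rw [← Polynomial.X_mul_divX_add f]
  conv_lhs => rw [← Polynomial.X_mul_divX_add f.divX]
  push_cast [map_add, map_mul]
  rw [← key]
  simp only [uE, eps, RingHom.comp_apply, map_mul, map_add]
  ring

/-- For a Type-8 left ideal `C₈` of `R^{3,x^{p^s}-λ}_Θ`,
`Tor₁(C₈) = (F_{p^m}[x,θ]/⟨(λ₀₀x-1)^{p^s}⟩) b₂(x)` and
`Tor₂(C₈) = (F_{p^m}[x,θ]/⟨(λ₀₀x-1)^{p^s}⟩) b₃(x)`. -/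
theorem statement17 (p m s : ℕ) [Fact p.Prime] (hm : 0 < m) (hs : 0 < s)
    (theta : Fq p m ≃+* Fq p m)
    (lc : ℕ → Fq p m) (hl0 : lc 0 ≠ 0)
    (hTlam : Th p m 3 theta (lamOf p m 3 lc) = lamOf p m 3 lc)
    (hord : thOrder p m 3 theta ∣ p ^ s)
    {P : Type*} [Ring P] (iot : Rt p m 3 →+* P) (Xp : P)
    (hXiot : ∀ r, Xp * iot r = iot (Th p m 3 theta r) * Xp)
    (hPrep : ∀ g : P, ∃! c : ℕ →₀ Rt p m 3, g = spoly iot Xp c)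
    {Pf : Type*} [Ring Pf] (iotf : Fq p m →+* Pf) (Xf : Pf)
    (hXiotf : ∀ a, Xf * iotf a = iotf (theta a) * Xf)
    (hPfrep : ∀ g : Pf, ∃! c : ℕ →₀ Fq p m, g = spoly iotf Xf c)
    {Q : Type*} [Ring Q] (piQ : P →+* Q) (hpiQ : Function.Surjective piQ)
    (hkerQ : RingHom.ker piQ = Ideal.span {Xp ^ p ^ s - iot (lamOf p m 3 lc)})
    {Qf : Type*} [Ring Qf] (pif : Pf →+* Qf) (hpif : Function.Surjective pif)
    (hkerf : RingHom.ker pif = Ideal.span {(iotf ((lc 0 ^ p ^ (m - s % m))⁻¹) * Xf - 1) ^ p ^ s})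
    (nu : P →+* Pf) (hnu1 : ∀ r, nu (iot r) = iotf (rdc p m 3 (by norm_num) r)) (hnu2 : nu Xp = Xf)
    (mu : Q →+* Qf) (hmu : ∀ c : P, mu (piQ c) = pif (nu c))
    (bc1 bc2 bc3 gc1 gc2 gc3 : ℕ →₀ Fq p m)
    (hb1 : InB p m iotf Xf ((iotf ((lc 0 ^ p ^ (m - s % m))⁻¹) * Xf - 1) ^ p ^ s) (p ^ s) bc1) (hb2 : InB p m iotf Xf ((iotf ((lc 0 ^ p ^ (m - s % m))⁻¹) * Xf - 1) ^ p ^ s) (p ^ s) bc2) (hb3 : InB p m iotf Xf ((iotf ((lc 0 ^ p ^ (m - s % m))⁻¹) * Xf - 1) ^ p ^ s) (p ^ s) bc3)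
    (hsideA : ∀ cc : ℕ →₀ Fq p m,
      uQ p m 3 iot piQ ^ 2 * lQ p m 3 iot Xp piQ cc ∈ Ideal.span {lQ p m 3 iot Xp piQ bc1 + uQ p m 3 iot piQ * lQ p m 3 iot Xp piQ gc1 + uQ p m 3 iot piQ ^ 2 * lQ p m 3 iot Xp piQ gc2} ⊔ Ideal.span {uQ p m 3 iot piQ * lQ p m 3 iot Xp piQ bc2 + uQ p m 3 iot piQ ^ 2 * lQ p m 3 iot Xp piQ gc3} → RDvdC p m iotf Xf pif bc3 cc)
    (hsideB : ∀ cc c2 : ℕ →₀ Fq p m,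
      uQ p m 3 iot piQ * lQ p m 3 iot Xp piQ cc + uQ p m 3 iot piQ ^ 2 * lQ p m 3 iot Xp piQ c2 ∈ Ideal.span {lQ p m 3 iot Xp piQ bc1 + uQ p m 3 iot piQ * lQ p m 3 iot Xp piQ gc1 + uQ p m 3 iot piQ ^ 2 * lQ p m 3 iot Xp piQ gc2} → RDvdC p m iotf Xf pif bc2 cc) :
    ⇑mu '' {c : Q | c * uQ p m 3 iot piQ ∈
        Ideal.span {lQ p m 3 iot Xp piQ bc1 + uQ p m 3 iot piQ * lQ p m 3 iot Xp piQ gc1 + uQ p m 3 iot piQ ^ 2 * lQ p m 3 iot Xp piQ gc2} ⊔ Ideal.span {uQ p m 3 iot piQ * lQ p m 3 iot Xp piQ bc2 + uQ p m 3 iot piQ ^ 2 * lQ p m 3 iot Xp piQ gc3} ⊔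
          Ideal.span {uQ p m 3 iot piQ ^ 2 * lQ p m 3 iot Xp piQ bc3}} =
        {y : Qf | ∃ h : Qf, y = h * lQf p m iotf Xf pif bc2} ∧
    ⇑mu '' {c : Q | c * uQ p m 3 iot piQ ^ 2 ∈
        Ideal.span {lQ p m 3 iot Xp piQ bc1 + uQ p m 3 iot piQ * lQ p m 3 iot Xp piQ gc1 + uQ p m 3 iot piQ ^ 2 * lQ p m 3 iot Xp piQ gc2} ⊔ Ideal.span {uQ p m 3 iot piQ * lQ p m 3 iot Xp piQ bc2 + uQ p m 3 iot piQ ^ 2 * lQ p m 3 iot Xp piQ gc3} ⊔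
          Ideal.span {uQ p m 3 iot piQ ^ 2 * lQ p m 3 iot Xp piQ bc3}} =
        {y : Qf | ∃ h : Qf, y = h * lQf p m iotf Xf pif bc3} := by
  classical
  set u : Q := uQ p m 3 iot piQ with hu_def
  set L : (ℕ →₀ Fq p m) → Q := lQ p m 3 iot Xp piQ with hL_def
  set Lf : (ℕ →₀ Fq p m) → Qf := lQf p m iotf Xf pif with hLf_def
  set G1 : Q := L bc1 + u * L gc1 + u ^ 2 * L gc2 with hG1_def
  set G2 : Q := u * L bc2 + u ^ 2 * L gc3 with hG2_def
  set G3 : Q := u ^ 2 * L bc3 with hG3_def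
  -- `u` is central
  have hcommXU : Commute Xp (iot (uE p m 3)) := by
    have h := hXiot (uE p m 3); rwa [Th_u] at h
  have hUc : ∀ x : P, iot (uE p m 3) * x = x * iot (uE p m 3) := by
    intro x
    obtain ⟨c, hcx, -⟩ := hPrep x
    rw [hcx]
    unfold spoly
    rw [Finsupp.mul_sum, Finsupp.sum_mul]
    refine Finsupp.sum_congr fun i _ => ?_
    have h1 : Commute (iot (uE p m 3)) (iot (c i)) := (Commute.all _ _).map iot
    have h2 : Commute (iot (uE p m 3)) (Xp ^ i) := hcommXU.symm.pow_right i
    exact (h1.mul_right h2).eq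
  have hu_comm : ∀ q : Q, u * q = q * u := by
    intro q; obtain ⟨g, rfl⟩ := hpiQ q
    rw [hu_def]
    unfold uQ
    rw [← map_mul, ← map_mul, hUc g]
  have hc2 : ∀ q : Q, u ^ 2 * q = q * u ^ 2 := by
    intro q
    rw [pow_two, mul_assoc, hu_comm q, ← mul_assoc, hu_comm q, mul_assoc]
  have hcomm3 : ∀ a b : Q, u * (a * b) = a * (u * b) := fun a b => by
    rw [← mul_assoc, hu_comm a, mul_assoc]
  have hcomm3sq : ∀ a b : Q, u ^ 2 * (a * b) = a * (u ^ 2 * b) := fun a b => by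
    rw [← mul_assoc, hc2 a, mul_assoc]
  have hu3 : u ^ 3 = 0 := by
    rw [hu_def]
    unfold uQ
    rw [← map_pow, ← map_pow, u_cube, map_zero, map_zero]
  have hu12 : u * u ^ 2 = 0 := by
    have h : u * u ^ 2 = u ^ 3 := (pow_succ' u 2).symm
    rw [h, hu3]
  have hu21 : u ^ 2 * u = 0 := by
    have h : u ^ 2 * u = u ^ 3 := (pow_succ u 2).symm
    rw [h, hu3]
  have hu22 : u ^ 2 * u ^ 2 = 0 := by
    rw [← pow_add, show (2 + 2 : ℕ) = 3 + 1 from rfl, pow_succ, hu3, zero_mul]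
  -- mu computations
  have hmuU : mu u = 0 := by
    rw [hu_def]
    unfold uQ
    rw [hmu, hnu1, rdc_u, map_zero, map_zero]
  have hnuL : ∀ c : ℕ →₀ Fq p m, nu (liftP p m 3 iot Xp c) = spoly iotf Xf c := by
    intro c
    unfold liftP spoly
    rw [map_finsuppSum]
    refine Finsupp.sum_congr fun i _ => ?_
    rw [map_mul, map_pow, hnu2, hnu1, rdc_eps]
  have hmuL : ∀ c : ℕ →₀ Fq p m, mu (L c) = Lf c := by
    intro c
    rw [hL_def, hLf_def]
    unfold lQ lQf
    rw [hmu, hnuL]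
  have hmusurj : Function.Surjective mu := by
    intro y; obtain ⟨z, rfl⟩ := hpif y
    obtain ⟨c, hcz, -⟩ := hPfrep z
    exact ⟨piQ (liftP p m 3 iot Xp c), by rw [hmu, hnuL, hcz]⟩
  -- decomposition of elements of Q
  obtain ⟨A0, A1, A2, hA0z, hA1z, hA2z, hA⟩ :
      ∃ A0 A1 A2 : Rt p m 3 → Fq p m, A0 0 = 0 ∧ A1 0 = 0 ∧ A2 0 = 0 ∧
        ∀ r, r = eps p m 3 (A0 r) + uE p m 3 * eps p m 3 (A1 r)
          + uE p m 3 ^ 2 * eps p m 3 (A2 r) := by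
    choose A0 A1 A2 h using fun r => decomp p m r
    refine ⟨fun r => if r = 0 then 0 else A0 r, fun r => if r = 0 then 0 else A1 r,
      fun r => if r = 0 then 0 else A2 r, if_pos rfl, if_pos rfl, if_pos rfl, fun r => ?_⟩
    by_cases hr : r = 0
    · simp [hr]
    · simp only [if_neg hr]; exact h r
  have hdec : ∀ X : Q, ∃ c0 c1 c2 : ℕ →₀ Fq p m, X = L c0 + u * L c1 + u ^ 2 * L c2 := by
    intro X
    obtain ⟨g, rfl⟩ := hpiQ X
    obtain ⟨cc, hg, -⟩ := hPrep g
    refine ⟨cc.mapRange A0 hA0z, cc.mapRange A1 hA1z, cc.mapRange A2 hA2z, ?_⟩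
    have key : spoly iot Xp cc
        = liftP p m 3 iot Xp (cc.mapRange A0 hA0z)
          + iot (uE p m 3) * liftP p m 3 iot Xp (cc.mapRange A1 hA1z)
          + iot (uE p m 3) ^ 2 * liftP p m 3 iot Xp (cc.mapRange A2 hA2z) := by
      unfold spoly liftP
      rw [Finsupp.sum_of_support_subset cc (Finset.Subset.refl _) _ (by intros; simp),
          Finsupp.sum_of_support_subset _ Finsupp.support_mapRange _ (by intros; simp),
          Finsupp.sum_of_support_subset _ Finsupp.support_mapRange _ (by intros; simp),
          Finsupp.sum_of_support_subset _ Finsupp.support_mapRange _ (by intros; simp)]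
      rw [Finset.mul_sum, Finset.mul_sum, ← Finset.sum_add_distrib, ← Finset.sum_add_distrib]
      refine Finset.sum_congr rfl fun i _ => ?_
      rw [Finsupp.mapRange_apply, Finsupp.mapRange_apply, Finsupp.mapRange_apply]
      conv_lhs => rw [hA (cc i)]
      rw [map_add, map_add, map_mul, map_mul, map_pow]
      rw [add_mul, add_mul, mul_assoc, mul_assoc]
    rw [hg, key, map_add, map_add, map_mul, map_mul, map_pow]
    rfl
  have hLsub : ∀ a b : ℕ →₀ Fq p m, L (a - b) = L a - L b := by
    intro a b
    rw [hL_def]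
    unfold lQ
    rw [← map_sub]
    congr 1
    unfold liftP
    exact Finsupp.sum_sub_index fun i b1 b2 => by rw [map_sub, map_sub, sub_mul]
  have hmulu : ∀ c0 c1 c2 : ℕ →₀ Fq p m,
      u * (L c0 + u * L c1 + u ^ 2 * L c2) = u * L c0 + u ^ 2 * L c1 := by
    intro c0 c1 c2
    rw [mul_add, mul_add, ← mul_assoc, ← mul_assoc, ← pow_two, hu12, zero_mul, add_zero]
  have hmulu2 : ∀ c0 c1 c2 : ℕ →₀ Fq p m,
      u ^ 2 * (L c0 + u * L c1 + u ^ 2 * L c2) = u ^ 2 * L c0 := by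
    intro c0 c1 c2
    rw [mul_add, mul_add, ← mul_assoc, ← mul_assoc, hu21, hu22, zero_mul, zero_mul,
      add_zero, add_zero]
  have hmem3 : ∀ x : Q, x ∈ Ideal.span {G1} ⊔ Ideal.span {G2} ⊔ Ideal.span {G3} →
      ∃ α β γ : Q, x = α * G1 + β * G2 + γ * G3 := by
    intro x hx
    obtain ⟨y, hy, z, hz, rfl⟩ := Submodule.mem_sup.mp hx
    obtain ⟨y1, hy1, y2, hy2, rfl⟩ := Submodule.mem_sup.mp hy
    obtain ⟨α, rfl⟩ := Ideal.mem_span_singleton'.mp hy1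
    obtain ⟨β, rfl⟩ := Ideal.mem_span_singleton'.mp hy2
    obtain ⟨γ, rfl⟩ := Ideal.mem_span_singleton'.mp hz
    exact ⟨α, β, γ, rfl⟩
  constructor
  · -- Tor₁
    ext y
    simp only [Set.mem_image, Set.mem_setOf_eq]
    constructor
    · rintro ⟨c, hc, rfl⟩
      obtain ⟨α, β, γ, heq⟩ := hmem3 _ hc
      obtain ⟨Y0, Y1, Y2, hY⟩ := hdec (c - β * L bc2)
      obtain ⟨Z0, Z1, Z2, hZ⟩ := hdec (β * L gc3 + γ * L bc3)
      have eY : u * (c - β * L bc2) = u * L Y0 + u ^ 2 * L Y1 := by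
        rw [hY]; exact hmulu Y0 Y1 Y2
      have eZ : u ^ 2 * (β * L gc3 + γ * L bc3) = u ^ 2 * L Z0 := by
        rw [hZ]; exact hmulu2 Z0 Z1 Z2
      have main : u * (c - β * L bc2) - u ^ 2 * (β * L gc3 + γ * L bc3) = α * G1 := by
        rw [mul_sub, mul_add, hcomm3 β (L bc2), hcomm3sq β (L gc3), hcomm3sq γ (L bc3),
          hu_comm c, heq, hG2_def, hG3_def]
        simp only [mul_add]
        abel
      have key : u * L Y0 + u ^ 2 * L (Y1 - Z0) = α * G1 := by
        rw [hLsub, mul_sub, ← add_sub_assoc, ← eY, ← eZ]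
        exact main
      have hmem : u * L Y0 + u ^ 2 * L (Y1 - Z0) ∈ Ideal.span {G1} := by
        rw [key]
        exact Ideal.mem_span_singleton'.mpr ⟨α, rfl⟩
      have hdvd : ∃ h : Qf, Lf Y0 = h * Lf bc2 := hsideB Y0 (Y1 - Z0) hmem
      obtain ⟨h, hh⟩ := hdvd
      refine ⟨h + mu β, ?_⟩
      have hc' : c = (c - β * L bc2) + β * L bc2 := (sub_add_cancel _ _).symm
      rw [hc', map_add, map_mul, hmuL, hY, map_add, map_add, map_mul, map_mul, map_pow,
        hmuU, hmuL]
      simp [hh, add_mul]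
    · rintro ⟨h, rfl⟩
      obtain ⟨H, rfl⟩ := hmusurj h
      refine ⟨H * (L bc2 + u * L gc3), ?_, ?_⟩
      · have hEq : (H * (L bc2 + u * L gc3)) * u = H * G2 := by
          rw [mul_assoc, add_mul, ← hu_comm (L bc2), mul_assoc u (L gc3) u,
            ← hu_comm (L gc3), ← mul_assoc u u (L gc3), ← pow_two, ← hG2_def]
        rw [hEq]
        exact Submodule.mem_sup_left
          (Submodule.mem_sup_right (Ideal.mem_span_singleton'.mpr ⟨H, rfl⟩))
      · rw [map_mul, map_add, map_mul, hmuU, zero_mul, add_zero, hmuL]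
  · -- Tor₂
    ext y
    simp only [Set.mem_image, Set.mem_setOf_eq]
    constructor
    · rintro ⟨c, hc, rfl⟩
      obtain ⟨α, β, γ, heq⟩ := hmem3 _ hc
      obtain ⟨Y0, Y1, Y2, hY⟩ := hdec (c - γ * L bc3)
      have eY : u ^ 2 * (c - γ * L bc3) = u ^ 2 * L Y0 := by
        rw [hY]; exact hmulu2 Y0 Y1 Y2
      have main : u ^ 2 * (c - γ * L bc3) = α * G1 + β * G2 := by
        rw [mul_sub, hcomm3sq γ (L bc3), hc2 c, heq, hG3_def]
        abel
      have key : u ^ 2 * L Y0 = α * G1 + β * G2 := by rw [← eY]; exact main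
      have hmem : u ^ 2 * L Y0 ∈ Ideal.span {G1} ⊔ Ideal.span {G2} := by
        rw [key]
        exact Submodule.add_mem _
          (Submodule.mem_sup_left (Ideal.mem_span_singleton'.mpr ⟨α, rfl⟩))
          (Submodule.mem_sup_right (Ideal.mem_span_singleton'.mpr ⟨β, rfl⟩))
      have hdvd : ∃ h : Qf, Lf Y0 = h * Lf bc3 := hsideA Y0 hmem
      obtain ⟨h, hh⟩ := hdvd
      refine ⟨h + mu γ, ?_⟩
      have hc' : c = (c - γ * L bc3) + γ * L bc3 := (sub_add_cancel _ _).symm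
      rw [hc', map_add, map_mul, hmuL, hY, map_add, map_add, map_mul, map_mul, map_pow,
        hmuU, hmuL]
      simp [hh, add_mul]
    · rintro ⟨h, rfl⟩
      obtain ⟨H, rfl⟩ := hmusurj h
      refine ⟨H * L bc3, ?_, ?_⟩
      · have hEq : (H * L bc3) * u ^ 2 = H * G3 := by
          rw [mul_assoc, ← hc2 (L bc3), ← hG3_def]
        rw [hEq]
        exact Submodule.mem_sup_right (Ideal.mem_span_singleton'.mpr ⟨H, rfl⟩)
      · rw [map_mul, hmuL]

end SkewPaper
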